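/- In the Verma module relation: for λ ∈ X⁺ dominant, the induced U-module map φ'_λ : M_0 ⊗ M_λ → K'(d) sending x·ξ_0 ⊗ ξ_λ to θ^d·x kills M_0 ⊗ T_λ, where T_λ ⊆ M_λ is the left ideal generated by θ_i^{(i,λ)+1}; concretely, φ'_λ(y·ξ_0 ⊗ θ_i^{(m)}ξ_λ) = (Σ_{t=0}^m (−1)^t v^{−t(p−m)} θ_i^{(m−t)} θ^d θ_i^{(t)})·y with p = (i,λ)+1, and this vanishes when m = p. -/

import Mathlib

noncomputable section
open scoped Classical TensorProduct

/-- The field `ℚ(v)` of rational functions over `ℚ`. -/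
abbrev Kq : Type := RatFunc ℚ

/-- The indeterminate `v`. -/
def vq : Kq := RatFunc.X

/-- The quantum integer `[s] = (v^s - v^{-s})/(v - v⁻¹)`. -/
def qint (s : ℤ) : Kq := (vq ^ s - vq ^ (-s)) / (vq - vq⁻¹)

/-- The quantum factorial `[s]!`. -/
def qfact (n : ℕ) : Kq := ∏ k ∈ Finset.range n, qint (k + 1)

/-- The quantum binomial coefficient. -/
def qbinom (s t : ℕ) : Kq := qfact s / (qfact t * qfact (s - t))

/-- A finite graph without loops on vertex set `I`, recorded by the number
`E i j` of edges joining `i` and `j`. -/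
structure GraphData (I : Type) where
  E : I → I → ℕ
  symm : ∀ i j, E i j = E j i
  loopless : ∀ i, E i i = 0

variable {I : Type}

/-- The Cartan pairing `(i,j) = 2δ_{ij} − #{edges between i and j}`. -/
def cart (G : GraphData I) (i j : I) : ℤ := if i = j then 2 else -(G.E i j : ℤ)

/-- The pairing `(i, μ)` of a vertex with an element `μ ∈ ℕ[I]`. -/
def pairing (G : GraphData I) (i : I) (μ : I →₀ ℕ) : ℤ :=
  μ.sum fun j n => (n : ℤ) * cart G i j

/-- The quantum Serre relation element attached to `i ≠ j`. -/
def serreElem (G : GraphData I) (i j : I) : FreeAlgebra Kq I :=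
  ∑ p ∈ Finset.range (2 + G.E i j),
    (((-1 : Kq) ^ p) * qbinom (1 + G.E i j) p) •
      (FreeAlgebra.ι Kq i ^ p * FreeAlgebra.ι Kq j *
        FreeAlgebra.ι Kq i ^ (1 + G.E i j - p))

/-- The quantum Serre relations. -/
inductive SerreRel (G : GraphData I) : FreeAlgebra Kq I → FreeAlgebra Kq I → Prop
  | serre : ∀ i j, i ≠ j → SerreRel G (serreElem G i j) 0

/-- Lusztig's algebra `f = U⁻` attached to the graph `G`: the free algebra on the
generators `θ_i` modulo the quantum Serre relations. -/
abbrev UM (G : GraphData I) : Type := RingQuot (SerreRel G)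

/-- The generator `θ_i` of `U⁻`. -/
def θ (G : GraphData I) (i : I) : UM G :=
  RingQuot.mkAlgHom Kq (SerreRel G) (FreeAlgebra.ι Kq i)

/-- The monomial `θ_{i_1} ⋯ θ_{i_m}`. -/
def word (G : GraphData I) (l : List I) : UM G := (l.map (θ G)).prod

/-- The degree in `ℕ[I]` of a monomial. -/
def degw (l : List I) : I →₀ ℕ := (l.map fun i => Finsupp.single i 1).sum

/-- The homogeneous component of `U⁻` of degree `μ ∈ ℕ[I]`. -/
def homog (G : GraphData I) (μ : I →₀ ℕ) : Submodule Kq (UM G) :=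
  Submodule.span Kq {x | ∃ l : List I, degw l = μ ∧ x = word G l}

variable [DecidableEq I]

/-- The framed graph `Γ̃` of `Γ`: vertex set `I ⊔ I⁺`, with the edges of `Γ`
together with one new edge joining `i` and `i⁺` for each `i ∈ I`. -/
def framed (G : GraphData I) : GraphData (I ⊕ I) where
  E x y :=
    match x, y with
    | Sum.inl i, Sum.inl j => G.E i j
    | Sum.inl i, Sum.inr j => if i = j then 1 else 0
    | Sum.inr i, Sum.inl j => if i = j then 1 else 0
    | Sum.inr _, Sum.inr _ => 0
  symm := by
    rintro (i | i) (j | j)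
    · exact G.symm i j
    · by_cases h : i = j
      · subst h; rfl
      · simp [h, Ne.symm h]
    · by_cases h : i = j
      · subst h; rfl
      · simp [h, Ne.symm h]
    · rfl
  loopless := by
    rintro (i | i)
    · exact G.loopless i
    · rfl

/-- The divided power `θ_i^{(n)} = θ_i^n/[n]!`. -/
def θdiv {J : Type} (G : GraphData J) (i : J) (n : ℕ) : UM G := (qfact n)⁻¹ • θ G i ^ n

/-- The defining recursion for the `E_i`-action on the Verma module `M_λ`
realized on `U⁻` (for a graph `G` on a vertex set `J`): `E_i(ξ_λ) = 0` and
`E_i(θ_j x) = θ_j E_i(x) + δ_{ij}[(i, λ − |x|)]·x`. -/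
def IsVermaE {J : Type} (G : GraphData J) (lam : J → ℤ) (i : J)
    (Eop : UM G →ₗ[Kq] UM G) : Prop :=
  Eop 1 = 0 ∧
  ∀ (j : J) (μ : J →₀ ℕ) (x : UM G), x ∈ homog G μ →
    Eop (θ G j * x) =
      θ G j * Eop x + (if i = j then qint (lam i - pairing G i μ) else 0) • x

/-- The `K_i`-action on the Verma module `M_λ`: multiplication by `v^{(i,λ−ν)}`
on the homogeneous component of degree `ν`. -/
def IsVermaKp {J : Type} (G : GraphData J) (lam : J → ℤ) (i : J)
    (Kop : UM G →ₗ[Kq] UM G) : Prop :=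
  ∀ (μ : J →₀ ℕ) (x : UM G), x ∈ homog G μ →
    Kop x = vq ^ (lam i - pairing G i μ) • x

/-- The `K_{−i}`-action on the Verma module `M_λ`. -/
def IsVermaKm {J : Type} (G : GraphData J) (lam : J → ℤ) (i : J)
    (Kop : UM G →ₗ[Kq] UM G) : Prop :=
  ∀ (μ : J →₀ ℕ) (x : UM G), x ∈ homog G μ →
    Kop x = vq ^ (-(lam i - pairing G i μ)) • x

variable [Fintype I]

/-- The element `θ^d = Π_{i∈I} θ_{i⁺}^{(d_i)}` of `U⁻_{Γ̃}` (the factors commute,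
so the order is immaterial). -/
def θframe (G : GraphData I) (d : I → ℕ) : UM (framed G) :=
  ((Finset.univ.toList (α := I)).map fun j => θdiv (framed G) (Sum.inr j) (d j)).prod

/-!
By `F`-equivariance, passing from `θ_i^{(m)}` to `θ_i^{(m+1)}` in the second factor applies the
twisted commutator `x ↦ θ_i x − v^{2m−d_i} x θ_i` to the image, and the sums
`S_m(Z) = Σ_t (−1)^t v^{−t(d_i+1−m)} θ_i^{(m−t)} Z θ_i^{(t)}` obey the same recursion
`[m+1] S_{m+1} = θ_i S_m − v^{2m−d_i} S_m θ_i` (a `v`-Pascal identity); this gives the formula.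

For the vanishing, only the factor `θ_{i⁺}^{(d_i)}` of `θ^d` fails to commute with `θ_i`, and
`i, i⁺` are joined by one edge. With `H = θ_i θ_{i⁺} − v⁻¹ θ_{i⁺} θ_i`, the two Serre
relations read `θ_i H = v H θ_i` and `H θ_{i⁺} = v θ_{i⁺} H`, whence
`S_k(θ_{i⁺}^{(n)}) = θ_{i⁺}^{(n−k)} H^{(k)}` and `S_{n+1}(θ_{i⁺}^{(n)}) = 0` for `n = d_i`.

Finally, the elements `y ⊗ w θ_j^{(d_j+1)}` with `w` a monomial are reached from
`y ⊗ θ_j^{(d_j+1)}` by the `F`-actions, which preserve the kernel of `Φ` because `K_{−j}` acts on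
homogeneous elements by scalars.
-/

lemma vq_ne_zero : vq ≠ 0 := RatFunc.X_ne_zero

lemma vq_pow_ne_one {n : ℕ} (hn : n ≠ 0) : vq ^ n ≠ 1 := by
  intro h
  have hX : (Polynomial.X : Polynomial ℚ) ^ n = 1 :=
    RatFunc.algebraMap_injective ℚ (by simpa [vq, RatFunc.algebraMap_X] using h)
  simpa [hn] using congrArg Polynomial.natDegree hX

lemma vq_zpow_ne_one {s : ℤ} (hs : s ≠ 0) : vq ^ s ≠ 1 := by
  obtain ⟨n, rfl | rfl⟩ := Int.eq_nat_or_neg s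
  · simpa using vq_pow_ne_one (n := n) (by omega)
  · simpa using vq_pow_ne_one (n := n) (by omega)

lemma vq_zpow_sub_zpow_neg_ne_zero {s : ℤ} (hs : s ≠ 0) : vq ^ s - vq ^ (-s) ≠ 0 := by
  intro h
  apply vq_zpow_ne_one (s := 2 * s) (by omega)
  rw [two_mul, zpow_add₀ vq_ne_zero]
  nth_rewrite 2 [sub_eq_zero.mp h]
  rw [← zpow_add₀ vq_ne_zero, add_neg_cancel, zpow_zero]

lemma vq_sub_inv_ne_zero : vq - vq⁻¹ ≠ 0 := by
  simpa using vq_zpow_sub_zpow_neg_ne_zero one_ne_zero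

lemma qint_mul_vq_sub_inv (s : ℤ) : qint s * (vq - vq⁻¹) = vq ^ s - vq ^ (-s) :=
  div_mul_cancel₀ _ vq_sub_inv_ne_zero

lemma qint_ne_zero {s : ℤ} (hs : s ≠ 0) : qint s ≠ 0 :=
  div_ne_zero (vq_zpow_sub_zpow_neg_ne_zero hs) vq_sub_inv_ne_zero

lemma qint_zero : qint 0 = 0 := by simp [qint]

lemma qint_one : qint 1 = 1 := by simpa [qint] using div_self vq_sub_inv_ne_zero

lemma qint_two : qint 2 = vq + vq⁻¹ := by
  apply mul_right_cancel₀ vq_sub_inv_ne_zero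
  rw [qint_mul_vq_sub_inv]
  have := vq_ne_zero
  simp only [zpow_neg, zpow_ofNat]
  field_simp
  ring

lemma qint_succ (s : ℤ) : qint (s + 1) = vq ^ (-s) + vq * qint s := by
  apply mul_right_cancel₀ vq_sub_inv_ne_zero
  rw [add_mul, mul_assoc, qint_mul_vq_sub_inv, qint_mul_vq_sub_inv]
  have := vq_ne_zero
  have := zpow_ne_zero s vq_ne_zero
  simp only [neg_add, zpow_add₀ vq_ne_zero, zpow_neg, zpow_one]
  field_simp
  ring

lemma qint_pascal (m t : ℤ) :
    qint (m + 1 - t) + vq ^ (m + 1) * qint t = vq ^ t * qint (m + 1) := by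
  apply mul_right_cancel₀ vq_sub_inv_ne_zero
  rw [add_mul, mul_assoc, mul_assoc, qint_mul_vq_sub_inv, qint_mul_vq_sub_inv,
    qint_mul_vq_sub_inv]
  have := vq_ne_zero
  have := zpow_ne_zero m vq_ne_zero
  have := zpow_ne_zero t vq_ne_zero
  simp only [neg_sub, neg_add, zpow_sub₀ vq_ne_zero, zpow_add₀ vq_ne_zero, zpow_neg, zpow_one]
  field_simp
  ring

lemma qfact_zero : qfact 0 = 1 := Finset.prod_range_zero _

lemma qfact_succ (n : ℕ) : qfact (n + 1) = qfact n * qint (n + 1) := by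
  rw [qfact, Finset.prod_range_succ]
  norm_cast

lemma qfact_ne_zero (n : ℕ) : qfact n ≠ 0 :=
  Finset.prod_ne_zero_iff.mpr fun k _ => qint_ne_zero (by omega)

lemma qbinom_zero_right (s : ℕ) : qbinom s 0 = 1 := by
  simp [qbinom, qfact_zero, qfact_ne_zero]

lemma qbinom_self (s : ℕ) : qbinom s s = 1 := by
  simp [qbinom, qfact_zero, qfact_ne_zero]

lemma qbinom_two_one : qbinom 2 1 = qint 2 := by
  simp [qbinom, qfact_succ, qfact_zero, qint_one]

def serreCoeff (n : ℤ) (m t : ℕ) : Kq := (-1) ^ t * vq ^ (-(t : ℤ) * ((n + 1) - (m : ℤ)))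

lemma serreCoeff_zero_right (n : ℤ) (m : ℕ) : serreCoeff n m 0 = 1 := by simp [serreCoeff]

lemma serreCoeff_succ (n : ℤ) (m t : ℕ) :
    serreCoeff n m (t + 1) * qint (m - t) - vq ^ (2 * m - n) * serreCoeff n m t * qint (t + 1)
      = qint (m + 1) * serreCoeff n (m + 1) (t + 1) := by
  have hv := vq_ne_zero
  set a := vq ^ (-(t : ℤ) * ((n + 1) - (m : ℤ)))
  set b := vq ^ ((m : ℤ) - n - 1)
  have h1 : vq ^ (-((t : ℤ) + 1) * ((n + 1) - (m : ℤ))) = a * b := by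
    rw [← zpow_add₀ hv]; ring_nf
  have h2 :
      vq ^ (-((t : ℤ) + 1) * ((n + 1) - ((m : ℤ) + 1))) = a * b * vq ^ ((t : ℤ) + 1) := by
    rw [← zpow_add₀ hv, ← zpow_add₀ hv]; ring_nf
  have h3 : vq ^ (2 * (m : ℤ) - n) = vq ^ ((m : ℤ) + 1) * b := by
    rw [← zpow_add₀ hv]; ring_nf
  have hp := qint_pascal m (t + 1)
  rw [show (m : ℤ) + 1 - (t + 1) = m - t by ring] at hp
  simp only [serreCoeff, pow_succ]
  push_cast
  rw [h1, h2, h3]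
  linear_combination (-1) ^ (t + 1) * a * b * hp

section DividedPowers

variable {A : Type*} [Ring A] [Algebra Kq A]

def qDivPow (F : A) (k : ℕ) : A := (qfact k)⁻¹ • F ^ k

lemma qDivPow_zero (F : A) : qDivPow F 0 = 1 := by simp [qDivPow, qfact_zero]

lemma mul_qDivPow (F : A) (k : ℕ) : F * qDivPow F k = qint (k + 1) • qDivPow F (k + 1) := by
  rw [qDivPow, qDivPow, mul_smul_comm, ← pow_succ', smul_smul, qfact_succ, mul_inv,
    mul_left_comm, mul_inv_cancel₀ (qint_ne_zero (by omega)), mul_one]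

lemma qDivPow_mul (F : A) (k : ℕ) : qDivPow F k * F = qint (k + 1) • qDivPow F (k + 1) := by
  rw [← mul_qDivPow, qDivPow, smul_mul_assoc, mul_smul_comm, (Commute.self_pow F k).eq]

lemma Commute.qDivPow_left {F C : A} (h : Commute F C) (k : ℕ) : Commute (qDivPow F k) C :=
  (h.pow_left k).smul_left _

/-- For `Z = G^{(n)}` and `m = n + 1` this is Lusztig's higher-order quantum Serre element. -/
def serreSum (F Z : A) (n : ℤ) (m : ℕ) : A :=
  ∑ t ∈ Finset.range (m + 1), serreCoeff n m t • (qDivPow F (m - t) * Z * qDivPow F t)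

lemma serreSum_zero (F Z : A) (n : ℤ) : serreSum F Z n 0 = Z := by
  simp [serreSum, serreCoeff_zero_right, qDivPow_zero]

lemma serreSum_mul_mul {F C₁ C₂ : A} (h₁ : Commute F C₁) (h₂ : Commute F C₂)
    (Z : A) (n : ℤ) (m : ℕ) :
    serreSum F (C₁ * Z * C₂) n m = C₁ * serreSum F Z n m * C₂ := by
  simp only [serreSum, Finset.mul_sum, Finset.sum_mul, mul_smul_comm, smul_mul_assoc]
  refine Finset.sum_congr rfl fun t _ => ?_
  rw [← mul_assoc, ← mul_assoc, (h₁.qDivPow_left _).eq, mul_assoc _ C₂,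
    ← (h₂.qDivPow_left t).eq]
  simp only [mul_assoc]

lemma serreSum_succ (F Z : A) (n : ℤ) (m : ℕ) :
    F * serreSum F Z n m - vq ^ (2 * m - n) • (serreSum F Z n m * F)
      = qint (m + 1) • serreSum F Z n (m + 1) := by
  set X : ℕ → A := fun t => qDivPow F (m + 1 - t) * Z * qDivPow F t
  have hleft : F * serreSum F Z n m
      = ∑ t ∈ Finset.range (m + 1), (serreCoeff n m (t + 1) * qint (m - t)) • X (t + 1)
        + qint (m + 1) • X 0 := by
    have hterm : ∀ t ∈ Finset.range (m + 1),
        F * (serreCoeff n m t • (qDivPow F (m - t) * Z * qDivPow F t))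
          = (serreCoeff n m t * qint (m - t + 1)) • X t := by
      intro t ht
      have ht : t ≤ m := Finset.mem_range_succ_iff.mp ht
      simp only [X, mul_smul_comm, ← mul_assoc, mul_qDivPow, smul_mul_assoc, smul_smul]
      rw [Nat.sub_add_comm ht]
      push_cast [ht]
      rfl
    have hcast : ∀ k : ℕ, (m : ℤ) - (k + 1 : ℕ) + 1 = m - k := fun k => by push_cast; ring
    rw [serreSum, Finset.mul_sum, Finset.sum_congr rfl hterm, Finset.sum_range_succ',
      Finset.sum_range_succ]
    simp only [hcast, sub_self, qint_zero, mul_zero, zero_smul, add_zero, serreCoeff_zero_right,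
      one_mul, Nat.cast_zero, sub_zero]
  have hright : serreSum F Z n m * F
      = ∑ t ∈ Finset.range (m + 1), (serreCoeff n m t * qint (t + 1)) • X (t + 1) := by
    simp only [serreSum, Finset.sum_mul, smul_mul_assoc, mul_assoc, qDivPow_mul, X,
      mul_smul_comm, smul_smul]
    refine Finset.sum_congr rfl fun t _ => ?_
    rw [Nat.add_sub_add_right]
  have hnext : serreSum F Z n (m + 1)
      = ∑ t ∈ Finset.range (m + 1), serreCoeff n (m + 1) (t + 1) • X (t + 1) + X 0 := by
    rw [serreSum, Finset.sum_range_succ', serreCoeff_zero_right, one_smul]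
  rw [hleft, hright, hnext, smul_add, Finset.smul_sum, Finset.smul_sum, add_sub_right_comm,
    ← Finset.sum_sub_distrib]
  congr 1
  refine Finset.sum_congr rfl fun t _ => ?_
  rw [smul_smul, smul_smul, ← sub_smul, ← mul_assoc, serreCoeff_succ]

end DividedPowers

section RankTwo

variable {A : Type*} [Ring A] [Algebra Kq A] {F G : A}

def qComm (F G : A) : A := F * G - vq⁻¹ • (G * F)

lemma mul_qComm (hF : F ^ 2 * G + G * F ^ 2 = qint 2 • (F * G * F)) :
    F * qComm F G = vq • (qComm F G * F) := by
  simp only [sq, ← mul_assoc, qint_two, add_smul] at hF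
  simp only [qComm, mul_sub, sub_mul, smul_sub, mul_smul_comm, smul_mul_assoc, smul_smul,
    mul_inv_cancel₀ vq_ne_zero, one_smul, ← mul_assoc]
  rw [← sub_eq_zero, ← sub_eq_zero.mpr hF]
  abel

lemma qComm_mul (hG : G ^ 2 * F + F * G ^ 2 = qint 2 • (G * F * G)) :
    qComm F G * G = vq • (G * qComm F G) := by
  simp only [sq, ← mul_assoc, qint_two, add_smul] at hG
  simp only [qComm, mul_sub, sub_mul, smul_sub, mul_smul_comm, smul_mul_assoc, smul_smul,
    mul_inv_cancel₀ vq_ne_zero, one_smul, ← mul_assoc]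
  rw [← sub_eq_zero, ← sub_eq_zero.mpr hG]
  abel

lemma mul_qDivPow_qComm (hF : F ^ 2 * G + G * F ^ 2 = qint 2 • (F * G * F)) (k : ℕ) :
    F * qDivPow (qComm F G) k = vq ^ (k : ℤ) • (qDivPow (qComm F G) k * F) := by
  suffices h : F * qComm F G ^ k = vq ^ k • (qComm F G ^ k * F) by
    rw [qDivPow, mul_smul_comm, h, zpow_natCast, smul_mul_assoc, smul_comm]
  induction k with
  | zero => simp
  | succ k ih =>
    rw [pow_succ, ← mul_assoc, ih, smul_mul_assoc, mul_assoc, mul_qComm hF, mul_smul_comm,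
      smul_smul, ← pow_succ, ← mul_assoc, ← pow_succ]

lemma mul_pow_succ_eq (hG : G ^ 2 * F + F * G ^ 2 = qint 2 • (G * F * G)) (a : ℕ) :
    F * G ^ (a + 1)
      = vq ^ (-(a + 1 : ℤ)) • (G ^ (a + 1) * F) + qint (a + 1) • (G ^ a * qComm F G) := by
  induction a with
  | zero => simp [qComm, qint_one]
  | succ a ih =>
    have hFG : F * G = vq⁻¹ • (G * F) + qComm F G := by rw [qComm]; abel
    rw [pow_succ, ← mul_assoc, ih, add_mul, smul_mul_assoc, smul_mul_assoc, mul_assoc,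
      mul_assoc, hFG, mul_assoc, qComm_mul hG, mul_add, mul_smul_comm, mul_smul_comm,
      ← mul_assoc, ← mul_assoc, ← pow_succ, ← pow_succ, smul_add, smul_smul, smul_smul]
    push_cast
    rw [qint_succ ((a : ℤ) + 1), add_smul, ← zpow_neg_one, ← zpow_add₀ vq_ne_zero, mul_comm]
    ring_nf
    abel

lemma mul_qDivPow_succ_eq (hG : G ^ 2 * F + F * G ^ 2 = qint 2 • (G * F * G)) (a : ℕ) :
    F * qDivPow G (a + 1)
      = vq ^ (-(a + 1 : ℤ)) • (qDivPow G (a + 1) * F) + qDivPow G a * qComm F G := by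
  have hq : (qfact (a + 1))⁻¹ * qint (a + 1) = (qfact a)⁻¹ := by
    rw [qfact_succ, mul_inv, mul_assoc, inv_mul_cancel₀ (qint_ne_zero (by omega)), mul_one]
  simp only [qDivPow, mul_smul_comm, mul_pow_succ_eq hG, smul_add, smul_smul, hq,
    smul_mul_assoc, mul_comm (qfact (a + 1))⁻¹]

variable (hF : F ^ 2 * G + G * F ^ 2 = qint 2 • (F * G * F))
  (hG : G ^ 2 * F + F * G ^ 2 = qint 2 • (G * F * G))
include hF hG

lemma twistedComm_qDivPow_mul_qDivPow (a k : ℕ) :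
    F * (qDivPow G (a + 1) * qDivPow (qComm F G) k)
        - vq ^ ((k : ℤ) - (a + 1)) • (qDivPow G (a + 1) * qDivPow (qComm F G) k * F)
      = qint (k + 1) • (qDivPow G a * qDivPow (qComm F G) (k + 1)) := by
  rw [← mul_assoc, mul_qDivPow_succ_eq hG, add_mul, smul_mul_assoc, mul_assoc,
    mul_qDivPow_qComm hF, mul_smul_comm, smul_smul, ← zpow_add₀ vq_ne_zero, mul_assoc,
    mul_qDivPow, mul_smul_comm, ← mul_assoc, neg_add_eq_sub, add_sub_cancel_left]

lemma serreSum_qDivPow (k : ℕ) : ∀ a : ℕ,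
    serreSum F (qDivPow G (a + k)) (a + k : ℕ) k = qDivPow G a * qDivPow (qComm F G) k := by
  induction k with
  | zero => simp [serreSum_zero, qDivPow_zero]
  | succ k ih =>
    intro a
    have h := serreSum_succ F (qDivPow G (a + (k + 1))) (a + (k + 1) : ℕ) k
    rw [show a + (k + 1) = a + 1 + k by omega, ih (a + 1),
      show 2 * (k : ℤ) - ((a + 1 + k : ℕ) : ℤ) = k - (a + 1) by push_cast; ring,
      twistedComm_qDivPow_mul_qDivPow hF hG] at h
    rw [show a + (k + 1) = a + 1 + k by omega]
    exact (smul_right_injective A (qint_ne_zero (by omega))).eq_iff.mp h.symm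

theorem serreSum_qDivPow_eq_zero (n : ℕ) : serreSum F (qDivPow G n) n (n + 1) = 0 := by
  have h := serreSum_succ F (qDivPow G n) n n
  have hn := serreSum_qDivPow hF hG n 0
  rw [zero_add, qDivPow_zero, one_mul] at hn
  rw [hn, mul_qDivPow_qComm hF, show 2 * (n : ℤ) - n = n by ring, sub_self] at h
  exact (smul_eq_zero.mp h.symm).resolve_left (qint_ne_zero (by omega))

end RankTwo

section Lusztig

variable {J : Type} (GG : GraphData J) {A : Type*} [Ring A] [Algebra Kq A]

lemma commute_of_map_serreElem {i j : J} (hE : GG.E i j = 0) (f : FreeAlgebra Kq J →ₐ[Kq] A)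
    (hf : f (serreElem GG i j) = 0) :
    Commute (f (FreeAlgebra.ι Kq i)) (f (FreeAlgebra.ι Kq j)) := by
  simp only [serreElem, hE, Finset.sum_range_succ, Finset.sum_range_zero, qbinom_zero_right,
    qbinom_self, Nat.reduceAdd, Nat.reduceSub, zero_add, pow_zero, pow_one, one_mul, mul_one,
    one_smul, neg_smul, map_add, map_neg, map_mul] at hf
  rw [Commute, SemiconjBy, ← sub_eq_zero, ← neg_eq_zero, ← hf]
  abel

lemma serre_of_map_serreElem {i j : J} (hE : GG.E i j = 1) (f : FreeAlgebra Kq J →ₐ[Kq] A)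
    (hf : f (serreElem GG i j) = 0) :
    f (FreeAlgebra.ι Kq i) ^ 2 * f (FreeAlgebra.ι Kq j)
        + f (FreeAlgebra.ι Kq j) * f (FreeAlgebra.ι Kq i) ^ 2
      = qint 2 • (f (FreeAlgebra.ι Kq i) * f (FreeAlgebra.ι Kq j) * f (FreeAlgebra.ι Kq i)) := by
  simp only [serreElem, hE, Finset.sum_range_succ, Finset.sum_range_zero, qbinom_zero_right,
    qbinom_self, qbinom_two_one, Nat.reduceAdd, Nat.reduceSub, zero_add, pow_zero, pow_one,
    one_mul, mul_one, one_smul, neg_one_mul, neg_smul, neg_one_sq, map_add, map_neg, map_mul,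
    map_pow, map_smul] at hf
  rw [← sub_eq_zero, ← hf]
  abel

lemma mkAlgHom_serreElem {i j : J} (hij : i ≠ j) :
    RingQuot.mkAlgHom Kq (SerreRel GG) (serreElem GG i j) = 0 := by
  rw [RingQuot.mkAlgHom_rel Kq (SerreRel.serre i j hij), map_zero]

lemma θ_commute_of_E_eq_zero {i j : J} (hij : i ≠ j) (hE : GG.E i j = 0) :
    Commute (θ GG i) (θ GG j) :=
  commute_of_map_serreElem GG hE _ (mkAlgHom_serreElem GG hij)

lemma θ_serre_of_E_eq_one {i j : J} (hij : i ≠ j) (hE : GG.E i j = 1) :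
    θ GG i ^ 2 * θ GG j + θ GG j * θ GG i ^ 2 = qint 2 • (θ GG i * θ GG j * θ GG i) :=
  serre_of_map_serreElem GG hE _ (mkAlgHom_serreElem GG hij)

end Lusztig

section Homogeneous

variable {J : Type} (GG : GraphData J)

lemma word_append (l₁ l₂ : List J) : word GG (l₁ ++ l₂) = word GG l₁ * word GG l₂ := by
  simp [word]

lemma degw_replicate (m : ℕ) (i : J) : degw (List.replicate m i) = Finsupp.single i m := by
  simp [degw, List.map_replicate, List.sum_replicate, Finsupp.smul_single]

lemma word_mem_homog (l : List J) : word GG l ∈ homog GG (degw l) :=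
  Submodule.subset_span ⟨l, rfl, rfl⟩

lemma θdiv_eq_smul_word (i : J) (m : ℕ) :
    θdiv GG i m = (qfact m)⁻¹ • word GG (List.replicate m i) := by
  simp [θdiv, word, List.map_replicate, List.prod_replicate]

lemma θdiv_mem_homog (i : J) (m : ℕ) : θdiv GG i m ∈ homog GG (Finsupp.single i m) := by
  rw [θdiv_eq_smul_word, ← degw_replicate]
  exact Submodule.smul_mem _ _ (word_mem_homog GG _)

lemma word_mul_θdiv_mem_homog (l : List J) (j : J) (m : ℕ) :
    word GG l * θdiv GG j m ∈ homog GG (degw (l ++ List.replicate m j)) := by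
  rw [θdiv_eq_smul_word, mul_smul_comm, ← word_append]
  exact Submodule.smul_mem _ _ (word_mem_homog GG _)

lemma pairing_single_self (i : J) (m : ℕ) : pairing GG i (Finsupp.single i m) = 2 * m := by
  simp [pairing, cart, mul_comm]

lemma mem_span_range_word (x : UM GG) : x ∈ Submodule.span Kq (Set.range (word GG)) := by
  have hadjoin : Algebra.adjoin Kq (Set.range (θ GG)) = ⊤ := by
    rw [show Set.range (θ GG) = RingQuot.mkAlgHom Kq (SerreRel GG) '' Set.range (FreeAlgebra.ι Kq)
        by rw [← Set.range_comp]; rfl,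
      ← AlgHom.map_adjoin, FreeAlgebra.adjoin_range_ι, Algebra.map_top, AlgHom.range_eq_top]
    exact RingQuot.mkAlgHom_surjective Kq (SerreRel GG)
  have hclosure :
      (Submonoid.closure (Set.range (θ GG)) : Set (UM GG)) ⊆ Set.range (word GG) := by
    rw [← FreeMonoid.mrange_lift]
    rintro _ ⟨l, rfl⟩
    exact ⟨l.toList, (FreeMonoid.lift_apply _ _).symm⟩
  have hx : x ∈ Subalgebra.toSubmodule (Algebra.adjoin Kq (Set.range (θ GG))) := by
    simp [hadjoin]
  rw [Algebra.adjoin_eq_span] at hx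
  exact Submodule.span_mono hclosure hx

end Homogeneous

section Framed

variable {J : Type} [DecidableEq J] (G : GraphData J)

variable [Fintype J]

lemma θframe_eq_mul_mul (d : J → ℕ) (i : J) : ∃ C₁ C₂ : UM (framed G),
    θframe G d = C₁ * qDivPow (θ (framed G) (Sum.inr i)) (d i) * C₂ ∧
      Commute (θ (framed G) (Sum.inl i)) C₁ ∧ Commute (θ (framed G) (Sum.inl i)) C₂ := by
  set f : J → UM (framed G) := fun j => θdiv (framed G) (Sum.inr j) (d j)
  have hcomm : ∀ l : List J, i ∉ l → Commute (θ (framed G) (Sum.inl i)) (l.map f).prod :=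
    fun l hl => Commute.list_prod_right _ _ fun _ hx => by
      obtain ⟨j, hj, rfl⟩ := List.mem_map.mp hx
      have hji : j ≠ i := ne_of_mem_of_not_mem hj hl
      exact ((θ_commute_of_E_eq_zero (framed G) (by simp) (by simp [framed, hji])).qDivPow_left
        _).symm
  obtain ⟨l₁, l₂, hsplit⟩ := List.append_of_mem (Finset.mem_toList.mpr (Finset.mem_univ i))
  have hnodup := Finset.nodup_toList (Finset.univ : Finset J)
  rw [hsplit, List.nodup_append, List.nodup_cons] at hnodup
  refine ⟨(l₁.map f).prod, (l₂.map f).prod, ?_, hcomm l₁ ?_, hcomm l₂ hnodup.2.1.1⟩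
  · rw [θframe, hsplit, List.map_append, List.prod_append, List.map_cons, List.prod_cons,
      ← mul_assoc]
    rfl
  · exact fun h => hnodup.2.2 i h i List.mem_cons_self rfl

lemma serreSum_θframe_eq_zero (d : J → ℕ) (i : J) :
    serreSum (θ (framed G) (Sum.inl i)) (θframe G d) (d i) (d i + 1) = 0 := by
  obtain ⟨C₁, C₂, hθ, h₁, h₂⟩ := θframe_eq_mul_mul G d i
  rw [hθ, serreSum_mul_mul h₁ h₂,
    serreSum_qDivPow_eq_zero (θ_serre_of_E_eq_one _ (by simp) (by simp [framed]))
      (θ_serre_of_E_eq_one _ (by simp) (by simp [framed])),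
    mul_zero, zero_mul]

end Framed

section VermaMap

variable {J : Type} (G : GraphData J) (lam : J → ℤ) {B : Type*} [Ring B] [Algebra Kq B]
  (e : J → B) (KmL : J → (UM G →ₗ[Kq] UM G)) (hKmL : ∀ i, IsVermaKm G lam i (KmL i))
  (Φ : (UM G ⊗[Kq] UM G) →ₗ[Kq] B)
  (hΦF : ∀ (i : J) (x y : UM G),
    Φ ((θ G i * x) ⊗ₜ[Kq] KmL i y) + Φ (x ⊗ₜ[Kq] (θ G i * y)) =
      e i * Φ (x ⊗ₜ[Kq] y))
include hKmL hΦF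

theorem Φ_tmul_θdiv {ι : UM G →ₐ[Kq] B} (hι : ∀ j, ι (θ G j) = e j) {Z : B}
    (hΦ1 : ∀ x, Φ (x ⊗ₜ[Kq] 1) = Z * ι x) (i : J) (m : ℕ) (y : UM G) :
    Φ (y ⊗ₜ[Kq] θdiv G i m) = serreSum (e i) Z (lam i) m * ι y := by
  induction m generalizing y with
  | zero => rw [serreSum_zero, ← hΦ1, show θdiv G i 0 = 1 from qDivPow_zero _]
  | succ m ih =>
    have hF := hΦF i y (θdiv G i m)
    rw [hKmL i _ _ (θdiv_mem_homog G i m), pairing_single_self,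
      show θ G i * θdiv G i m = qint (m + 1) • θdiv G i (m + 1) from mul_qDivPow _ _,
      TensorProduct.tmul_smul, TensorProduct.tmul_smul, map_smul, map_smul, ih, ih, map_mul,
      hι, show -(lam i - 2 * m) = 2 * m - lam i by ring] at hF
    refine smul_right_injective B (qint_ne_zero (by omega) : qint (m + 1) ≠ 0) ?_
    dsimp only
    rw [← smul_mul_assoc, ← serreSum_succ, eq_sub_of_add_eq' hF, sub_mul, smul_mul_assoc,
      mul_assoc, mul_assoc]

theorem Φ_tmul_word_mul_θdiv_eq_zero {j : J} {p : ℕ}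
    (hT : ∀ y, Φ (y ⊗ₜ[Kq] θdiv G j p) = 0) (l : List J) (y : UM G) :
    Φ (y ⊗ₜ[Kq] (word G l * θdiv G j p)) = 0 := by
  induction l generalizing y with
  | nil => simpa [word] using hT y
  | cons k l ih =>
    have hF := hΦF k y (word G l * θdiv G j p)
    rw [hKmL k _ _ (word_mul_θdiv_mem_homog G l j p), TensorProduct.tmul_smul, map_smul, ih, ih,
      smul_zero, zero_add, mul_zero] at hF
    simpa [word, mul_assoc] using hF

theorem Φ_tmul_mul_θdiv_eq_zero {j : J} {p : ℕ} (hT : ∀ y, Φ (y ⊗ₜ[Kq] θdiv G j p) = 0)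
    (x y : UM G) : Φ (y ⊗ₜ[Kq] (x * θdiv G j p)) = 0 := by
  induction mem_span_range_word G x using Submodule.span_induction with
  | mem _ hw =>
    obtain ⟨l, rfl⟩ := hw
    exact Φ_tmul_word_mul_θdiv_eq_zero G lam e KmL hKmL Φ hΦF hT l y
  | zero => rw [zero_mul, TensorProduct.tmul_zero, map_zero]
  | add a b _ _ ha hb => rw [add_mul, TensorProduct.tmul_add, map_add, ha, hb, add_zero]
  | smul c a _ ha => rw [smul_mul_assoc, TensorProduct.tmul_smul, map_smul, ha, smul_zero]

end VermaMap

theorem phi_kills_M0_tensor_T_general (G : GraphData I) (d : I → ℕ)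
    -- the embedding `U⁻_Γ → U⁻_{Γ̃}`:
    (ι : UM G →ₐ[Kq] UM (framed G))
    (hι : ∀ j : I, ι (θ G j) = θ (framed G) (Sum.inl j))
    -- the actions entering the `U`-module structures:
    (KmL : I → (UM G →ₗ[Kq] UM G))
    (hKmL : ∀ i, IsVermaKm G (fun j => (d j : ℤ)) i (KmL i))
    -- the map `φ'_λ` on `M₀ ⊗ M_λ`:
    (Φ : (UM G ⊗[Kq] UM G) →ₗ[Kq] UM (framed G))
    (hΦ1 : ∀ x : UM G, Φ (x ⊗ₜ[Kq] 1) = θframe G d * ι x)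
    -- `Φ` intertwines the `F_i`-actions (via `Δ(F_i) = F_i⊗K_{−i} + 1⊗F_i`):
    (hΦF : ∀ (i : I) (x y : UM G),
      Φ ((θ G i * x) ⊗ₜ[Kq] KmL i y) + Φ (x ⊗ₜ[Kq] (θ G i * y)) =
        θ (framed G) (Sum.inl i) * Φ (x ⊗ₜ[Kq] y))
    (i : I) :
    -- the concrete formula:
    (∀ (y : UM G) (m : ℕ),
      Φ (y ⊗ₜ[Kq] θdiv G i m) =
        (∑ tt ∈ Finset.range (m + 1),
          (((-1 : Kq) ^ tt) * vq ^ (-(tt : ℤ) * (((d i : ℤ) + 1) - (m : ℤ)))) •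
            (θdiv (framed G) (Sum.inl i) (m - tt) * θframe G d *
              θdiv (framed G) (Sum.inl i) tt)) * ι y) ∧
    -- vanishing at `m = p = d_i + 1`:
    (∀ y : UM G, Φ (y ⊗ₜ[Kq] θdiv G i (d i + 1)) = 0) ∧
    -- `Φ` kills `M₀ ⊗ T_λ`:
    (∀ (y x : UM G) (j : I), Φ (y ⊗ₜ[Kq] (x * θdiv G j (d j + 1))) = 0) := by
  have hΦ := Φ_tmul_θdiv G (fun j => (d j : ℤ)) _ KmL hKmL Φ hΦF hι hΦ1
  have hvanish : ∀ j y, Φ (y ⊗ₜ[Kq] θdiv G j (d j + 1)) = 0 := fun j y => by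
    rw [hΦ, serreSum_θframe_eq_zero, zero_mul]
  exact ⟨fun y m => hΦ i m y, hvanish i, fun y x j =>
    Φ_tmul_mul_θdiv_eq_zero G _ _ KmL hKmL Φ hΦF (hvanish j) x y⟩

/-- The induced `U`-module map `φ'_λ : M₀ ⊗ M_λ → K'(d)` (characterized by
`x·ξ₀ ⊗ ξ_λ ↦ θ^d·x` and `U`-equivariance, recorded through the hypotheses below)
kills `M₀ ⊗ T_λ`, where `λ` is dominant with `(i,λ) = d_i` and `T_λ` is the left
ideal generated by the `θ_i^{(i,λ)+1}`.  Concretely,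
`φ'_λ(y·ξ₀ ⊗ θ_i^{(m)}ξ_λ) = (Σ_{t=0}^m (−1)^t v^{−t(p−m)} θ_i^{(m−t)} θ^d θ_i^{(t)})·y`
with `p = (i,λ)+1`, and this vanishes when `m = p`. -/
theorem phi_kills_M0_tensor_T (G : GraphData I) (d : I → ℕ)
    -- the embedding `U⁻_Γ → U⁻_{Γ̃}`:
    (ι : UM G →ₐ[Kq] UM (framed G))
    (hι : ∀ j : I, ι (θ G j) = θ (framed G) (Sum.inl j))
    -- the actions entering the `U`-module structures:
    (E0 EL Kp0 KmL : I → (UM G →ₗ[Kq] UM G))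
    (hE0 : ∀ i, IsVermaE G (fun _ => 0) i (E0 i))
    (hEL : ∀ i, IsVermaE G (fun j => (d j : ℤ)) i (EL i))
    (hKp0 : ∀ i, IsVermaKp G (fun _ => 0) i (Kp0 i))
    (hKmL : ∀ i, IsVermaKm G (fun j => (d j : ℤ)) i (KmL i))
    (EK : I → (UM (framed G) →ₗ[Kq] UM (framed G)))
    (hEK : ∀ i, IsVermaE (framed G) (fun _ => 0) (Sum.inl i) (EK i))
    -- the map `φ'_λ` on `M₀ ⊗ M_λ`:
    (Φ : (UM G ⊗[Kq] UM G) →ₗ[Kq] UM (framed G))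
    (hΦ1 : ∀ x : UM G, Φ (x ⊗ₜ[Kq] 1) = θframe G d * ι x)
    -- `Φ` intertwines the `F_i`-actions (via `Δ(F_i) = F_i⊗K_{−i} + 1⊗F_i`):
    (hΦF : ∀ (i : I) (x y : UM G),
      Φ ((θ G i * x) ⊗ₜ[Kq] KmL i y) + Φ (x ⊗ₜ[Kq] (θ G i * y)) =
        θ (framed G) (Sum.inl i) * Φ (x ⊗ₜ[Kq] y))
    -- `Φ` intertwines the `E_i`-actions (via `Δ(E_i) = E_i⊗1 + K_i⊗E_i`):
    (hΦE : ∀ (i : I) (x y : UM G),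
      Φ (E0 i x ⊗ₜ[Kq] y) + Φ (Kp0 i x ⊗ₜ[Kq] EL i y) =
        EK i (Φ (x ⊗ₜ[Kq] y)))
    (i : I) :
    -- the concrete formula:
    (∀ (y : UM G) (m : ℕ),
      Φ (y ⊗ₜ[Kq] θdiv G i m) =
        (∑ tt ∈ Finset.range (m + 1),
          (((-1 : Kq) ^ tt) * vq ^ (-(tt : ℤ) * (((d i : ℤ) + 1) - (m : ℤ)))) •
            (θdiv (framed G) (Sum.inl i) (m - tt) * θframe G d *
              θdiv (framed G) (Sum.inl i) tt)) * ι y) ∧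
    -- vanishing at `m = p = d_i + 1`:
    (∀ y : UM G, Φ (y ⊗ₜ[Kq] θdiv G i (d i + 1)) = 0) ∧
    -- `Φ` kills `M₀ ⊗ T_λ`:
    (∀ (y x : UM G) (j : I), Φ (y ⊗ₜ[Kq] (x * θdiv G j (d j + 1))) = 0) :=
  phi_kills_M0_tensor_T_general G d ι hι KmL hKmL Φ hΦ1 hΦF i
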